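/- Let T be a directed tree, {λ_v}_{v∈V°} a system of complex numbers, {ε_v}_{v∈V} a system of nonnegative reals, and {μ_v}_{v∈V} a system of Borel probability measures on [0,∞) satisfying, for every u ∈ V and Borel σ ⊆ [0,∞), μ_u(σ) = ∑_{v∈Chi(u)} |λ_v|² ∫_σ (1/s) dμ_v(s) + ε_u δ₀(σ). Then: (i) for every u ∈ V, ∑_{v∈Chi(u)} |λ_v|² ∫_{[0,∞)} (1/s) dμ_v(s) ≤ 1 and ε_u = 1 − ∑_{v∈Chi(u)} |λ_v|² ∫_{[0,∞)} (1/s) dμ_v(s); (ii) for every u ∈ V, μ_u({0}) = 0 if and only if ε_u = 0; (iii) for every v ∈ V°, if λ_v ≠ 0 then μ_v({0}) = 0; (iv) for every u ∈ V, every n ≥ 1 and every Borel σ ⊆ [0,∞), μ_u(σ) = ∑_{v∈Chi^n(u)} |λ_{u|v}|² ∫_σ (1/s^n) dμ_v(s) + ε_u δ₀(σ). -/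

import Mathlib

open MeasureTheory ENNReal
open scoped NNReal
noncomputable section

/-- `μ` is a representing measure of the sequence `t`. -/
def IsRepMeasure (μ : Measure ℝ≥0) (t : ℕ → ℝ) : Prop :=
  ∀ n : ℕ, Integrable (fun s : ℝ≥0 => (s : ℝ) ^ n) μ ∧ t n = ∫ s, (s : ℝ) ^ n ∂μ

/-- `t` is a Stieltjes moment sequence. -/
def IsStieltjesMoment (t : ℕ → ℝ) : Prop := ∃ μ : Measure ℝ≥0, IsRepMeasure μ t

/-- `t` is a determinate Stieltjes moment sequence. -/
def IsDetStieltjesMoment (t : ℕ → ℝ) : Prop := ∃! μ : Measure ℝ≥0, IsRepMeasure μ t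

section Operators

universe u
variable {H : Type u} [NormedAddCommGroup H] [InnerProductSpace ℂ H]

/-- The maximal domain of the composition `S ∘ T`. -/
def compDomain (S T : H →ₗ.[ℂ] H) : Submodule ℂ H where
  carrier := {x | ∃ hx : x ∈ T.domain, T ⟨x, hx⟩ ∈ S.domain}
  zero_mem' := ⟨T.domain.zero_mem, by
    have h0 : (⟨0, T.domain.zero_mem⟩ : T.domain) = 0 := rfl
    rw [h0, LinearPMap.map_zero]; exact S.domain.zero_mem⟩
  add_mem' := by
    rintro x y ⟨hx, hx'⟩ ⟨hy, hy'⟩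
    refine ⟨T.domain.add_mem hx hy, ?_⟩
    have : (⟨x + y, T.domain.add_mem hx hy⟩ : T.domain) = ⟨x, hx⟩ + ⟨y, hy⟩ := rfl
    rw [this, LinearPMap.map_add]
    exact S.domain.add_mem hx' hy'
  smul_mem' := by
    rintro c x ⟨hx, hx'⟩
    refine ⟨T.domain.smul_mem c hx, ?_⟩
    have : (⟨c • x, T.domain.smul_mem c hx⟩ : T.domain) = c • (⟨x, hx⟩ : T.domain) := rfl
    rw [this, LinearPMap.map_smul]
    exact S.domain.smul_mem c hx'

/-- Composition `S ∘ T` of partial operators, on the maximal domain. -/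
def pmapComp (S T : H →ₗ.[ℂ] H) : H →ₗ.[ℂ] H :=
  S.comp (T.domRestrict (compDomain S T)) (by
    rintro ⟨x, hx⟩
    have hxT : x ∈ T.domain := (Submodule.mem_inf.mp hx).2
    have hxD : x ∈ compDomain S T := (Submodule.mem_inf.mp hx).1
    first
      | exact hxD.choose_spec
      | (erw [LinearPMap.domRestrict_apply (show ((⟨x, hx⟩ : ↥(compDomain S T ⊓ T.domain)) : H)
          = ((⟨x, hxT⟩ : T.domain) : H) from rfl)]
         exact hxD.choose_spec))

/-- Powers of a partial operator: `pmapPow S n = Sⁿ` with its natural domain. -/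
def pmapPow (S : H →ₗ.[ℂ] H) : ℕ → (H →ₗ.[ℂ] H)
  | 0 => LinearMap.id.toPMap ⊤
  | n + 1 => pmapComp (pmapPow S n) S

open Classical in
/-- Total (junk-valued) application of the power `Sⁿ`. -/
def powApp (S : H →ₗ.[ℂ] H) (n : ℕ) (x : H) : H :=
  if h : x ∈ (pmapPow S n).domain then (pmapPow S n) ⟨x, h⟩ else 0

/-- The set of `C^∞`-vectors of `S`. -/
def Dinf (S : H →ₗ.[ℂ] H) : Set H := {x | ∀ n : ℕ, x ∈ (pmapPow S n).domain}

/-- `F` is a core of `S`. -/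
def IsCore (S : H →ₗ.[ℂ] H) (F : Submodule ℂ H) : Prop :=
  F ≤ S.domain ∧ (S.graph : Set (H × H)) ⊆ closure ((S.domRestrict F).graph : Set (H × H))

end Operators
section Operators
universe u
variable {H : Type u} [NormedAddCommGroup H] [InnerProductSpace ℂ H]

/-- A normal (unbounded) operator: closed, densely defined, with `D(N*) = D(N)` and
`‖N* x‖ = ‖N x‖` on the common domain. -/
def IsNormalOp [CompleteSpace H] (N : H →ₗ.[ℂ] H) : Prop :=
  Dense (N.domain : Set H) ∧ N.IsClosed ∧ N.adjoint.domain = N.domain ∧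
    ∀ (x : H) (hx : x ∈ N.domain) (hx' : x ∈ N.adjoint.domain),
      ‖N.adjoint ⟨x, hx'⟩‖ = ‖N ⟨x, hx⟩‖

/-- A subnormal operator: densely defined with a normal extension in a possibly
larger Hilbert space. -/
def IsSubnormal {H : Type u} [NormedAddCommGroup H] [InnerProductSpace ℂ H]
    (S : H →ₗ.[ℂ] H) : Prop :=
  Dense (S.domain : Set H) ∧
  ∃ (K : Type u) (_ : NormedAddCommGroup K) (_ : InnerProductSpace ℂ K) (_ : CompleteSpace K)
    (J : H →ₗᵢ[ℂ] K) (N : K →ₗ.[ℂ] K), IsNormalOp N ∧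
      ∀ x : S.domain, ∃ hx : J x ∈ N.domain, N ⟨J x, hx⟩ = J (S x)

/-- A hyponormal operator. -/
def IsHyponormal [CompleteSpace H] (S : H →ₗ.[ℂ] H) : Prop :=
  Dense (S.domain : Set H) ∧
  ∀ (x : H) (hx : x ∈ S.domain), ∃ hx' : x ∈ S.adjoint.domain,
      ‖S.adjoint ⟨x, hx'⟩‖ ≤ ‖S ⟨x, hx⟩‖

end Operators

/-- A directed tree on the vertex set `V`: a connected directed graph without circuits
in which every non-root vertex has a unique parent. -/
structure DirectedTree (V : Type*) where
  edge : V → V → Prop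
  connected : ∀ u v : V, Relation.ReflTransGen (fun a b => edge a b ∨ edge b a) u v
  no_circuits : ∀ v : V, ¬ Relation.TransGen edge v v
  parent_unique : ∀ u v w : V, edge v u → edge w u → v = w

namespace DirectedTree

variable {V : Type*}

/-- The roots: vertices with no incoming edge. -/
def isRoot (T : DirectedTree V) (v : V) : Prop := ¬ ∃ u : V, T.edge u v

/-- `V°`: the non-root vertices, i.e. vertices having a parent. -/
def nonRoot (T : DirectedTree V) (v : V) : Prop := ∃ u : V, T.edge u v

open Classical in
/-- The parent function (with junk value at roots). -/
def par (T : DirectedTree V) (v : V) : V := if h : ∃ u : V, T.edge u v then h.choose else v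

/-- The set of children of a vertex. -/
def chi (T : DirectedTree V) (u : V) : Set V := {v | T.edge u v}

/-- Iterated children `Chi^n(u)`. -/
def chiN (T : DirectedTree V) : ℕ → V → Set V
  | 0, u => {u}
  | n + 1, u => ⋃ w ∈ T.chiN n u, T.chi w

/-- The descendants of `u`. -/
def des (T : DirectedTree V) (u : V) : Set V := ⋃ n : ℕ, T.chiN n u

/-- `T` is leafless: every vertex has a child. -/
def Leafless (T : DirectedTree V) : Prop := ∀ u : V, ∃ v : V, T.edge u v

/-- The product `λ_{u∣v} = ∏_{j=0}^{n-1} λ_{par^j(v)}` of the weights along the path of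
length `n` ending at `v` (for `v ∈ Chi^n(u)` this is the usual `λ_{u∣v}`). -/
def pathProd (T : DirectedTree V) (lam : V → ℂ) (n : ℕ) (v : V) : ℂ :=
  ∏ j ∈ Finset.range n, lam (T.par^[j] v)

open Classical in
/-- The formal weighted-shift transformation `Λ_T` on families of complex numbers. -/
def lamMap (T : DirectedTree V) (lam : V → ℂ) (f : V → ℂ) : V → ℂ :=
  fun v => if T.nonRoot v then lam v * f (T.par v) else 0

variable (T : DirectedTree V)

theorem lamMap_add (lam : V → ℂ) (f g : V → ℂ) :
    T.lamMap lam (f + g) = T.lamMap lam f + T.lamMap lam g := by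
  funext v; simp only [lamMap, Pi.add_apply]; split <;> ring

theorem lamMap_smul (lam : V → ℂ) (c : ℂ) (f : V → ℂ) :
    T.lamMap lam (c • f) = c • T.lamMap lam f := by
  funext v; simp only [lamMap, Pi.smul_apply, smul_eq_mul]; split <;> ring

theorem lamMap_zero (lam : V → ℂ) : T.lamMap lam (0 : V → ℂ) = 0 := by
  funext v; simp [lamMap]

/-- The domain of the weighted shift `S_λ`. -/
def shiftDomain (lam : V → ℂ) : Submodule ℂ (lp (fun _ : V => ℂ) 2) where
  carrier := {f | Memℓp (T.lamMap lam f) 2}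
  zero_mem' := by
    rw [Set.mem_setOf_eq, lp.coeFn_zero, lamMap_zero]
    exact zero_memℓp
  add_mem' := by
    intro f g hf hg
    rw [Set.mem_setOf_eq, lp.coeFn_add, lamMap_add]
    exact hf.add hg
  smul_mem' := by
    intro c f hf
    rw [Set.mem_setOf_eq, lp.coeFn_smul, lamMap_smul]
    exact hf.const_smul c

/-- The weighted shift `S_λ` on the directed tree `T`, as a partial operator in `ℓ²(V)`. -/
def shift (lam : V → ℂ) : lp (fun _ : V => ℂ) 2 →ₗ.[ℂ] lp (fun _ : V => ℂ) 2 where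
  domain := T.shiftDomain lam
  toFun :=
    { toFun := fun f => (⟨T.lamMap lam f, f.2⟩ : lp (fun _ : V => ℂ) 2)
      map_add' := by
        rintro f g
        apply lp.ext
        rw [lp.coeFn_add]
        show T.lamMap lam
            ((((f : lp (fun _ : V => ℂ) 2) : V → ℂ)) + (((g : lp (fun _ : V => ℂ) 2) : V → ℂ)))
          = T.lamMap lam ((f : lp (fun _ : V => ℂ) 2) : V → ℂ)
            + T.lamMap lam ((g : lp (fun _ : V => ℂ) 2) : V → ℂ)
        exact T.lamMap_add lam _ _
      map_smul' := by
        rintro c f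
        apply lp.ext
        rw [lp.coeFn_smul]
        show T.lamMap lam (c • (((f : lp (fun _ : V => ℂ) 2) : V → ℂ)))
          = c • T.lamMap lam ((f : lp (fun _ : V => ℂ) 2) : V → ℂ)
        exact T.lamMap_smul lam c _ }

end DirectedTree

open Classical in
/-- The basis vector `e_u` of `ℓ²(V)`. -/
def eVec {V : Type*} (u : V) : lp (fun _ : V => ℂ) 2 := lp.single 2 u 1

section MoreDefs
universe u
variable {H : Type u} [NormedAddCommGroup H] [InnerProductSpace ℂ H]

/-- The inner product, linear in the FIRST argument (the paper's convention). -/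
def innerPaper (x y : H) : ℂ := inner ℂ y x

/-- The moment sequence `n ↦ ‖Sⁿ f‖²` generated by the vector `f`. -/
def momentSeq (S : H →ₗ.[ℂ] H) (f : H) : ℕ → ℝ := fun n => ‖powApp S n f‖ ^ 2

/-- `f` is a quasi-analytic vector of `S` : `f ∈ D^∞(S)` and
`∑ₙ ‖Sⁿ f‖^{-1/n} = ∞` (with `1/0 = ∞`). -/
def IsQuasiAnalyticVec (S : H →ₗ.[ℂ] H) (f : H) : Prop :=
  (∀ n : ℕ, f ∈ (pmapPow S n).domain) ∧
  ∑' n : ℕ, ((‖powApp S (n + 1) f‖₊ ^ ((1 : ℝ) / (n + 1)) : ℝ≥0) : ℝ≥0∞)⁻¹ = ∞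

end MoreDefs

/-- The consistency condition `μ_u(σ) = ∑_{v ∈ Chi(u)} |λ_v|² ∫_σ (1/s) dμ_v(s) + ε_u δ₀(σ)`
at the vertex `u` (with the convention `1/0 = ∞`). -/
def consistentAt {V : Type*} (T : DirectedTree V) (lam : V → ℂ) (μ : V → MeasureTheory.Measure ℝ≥0)
    (ε : V → ℝ≥0) (u : V) : Prop :=
  ∀ σ : Set ℝ≥0, MeasurableSet σ →
    μ u σ = (∑' v : {v : V // T.edge u v},
        (‖lam (v : V)‖₊ : ℝ≥0∞) ^ 2 * ∫⁻ s in σ, ((s : ℝ≥0∞))⁻¹ ∂(μ (v : V)))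
      + (ε u : ℝ≥0∞) * MeasureTheory.Measure.dirac (0 : ℝ≥0) σ

/-- The sequence `{ϑ, t₀, t₁, t₂, …}` obtained by prepending `ϑ` to `t`. -/
def shiftedSeq (ϑ : ℝ) (t : ℕ → ℝ) : ℕ → ℝ := fun n => match n with
  | 0 => ϑ
  | n + 1 => t n

/-- A positive definite sequence of real numbers. -/
def IsPosDefSeq (t : ℕ → ℝ) : Prop :=
  ∀ (n : ℕ) (α : ℕ → ℂ),
    0 ≤ (∑ k ∈ Finset.range (n + 1), ∑ l ∈ Finset.range (n + 1),
        (t (k + l) : ℂ) * α k * (starRingEnd ℂ) (α l)).re ∧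
    (∑ k ∈ Finset.range (n + 1), ∑ l ∈ Finset.range (n + 1),
        (t (k + l) : ℂ) * α k * (starRingEnd ℂ) (α l)).im = 0


/-!
The consistency condition says `μ_u = ∑_{v ∈ Chi(u)} |λ_v|² s⁻¹ μ_v + ε_u δ₀`. Evaluating it on
`[0,∞)` gives (i). On `{0}`, a child with `λ_v ≠ 0` and `μ_v{0} > 0` would contribute `∞` to the
finite mass `μ_u{0}`; this gives (iii), and then `μ_u{0} = ε_u`, which is (ii). Integrating
`s^{-n}` against the condition at every vertex of `Chi^n(u)` passes from generation `n` to
generation `n + 1`, up to atoms `|λ_{u|v}|² ε_v (0^n)⁻¹ δ₀`. For `n ≥ 1` these vanish, since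
`λ_{u|v} ≠ 0` forces `λ_v ≠ 0` and hence `ε_v = 0` by (ii) and (iii); so (iv) follows by
induction on `n`, starting from the consistency condition at `n = 1`.
-/

namespace DirectedTree

variable {V : Type*} (T : DirectedTree V)

theorem par_eq_of_edge {v w : V} (hvw : T.edge v w) : T.par w = v := by
  have hex : ∃ u, T.edge u w := ⟨v, hvw⟩
  rw [par, dif_pos hex]
  exact T.parent_unique w _ v hex.choose_spec hvw

theorem pathProd_succ (lam : V → ℂ) (n : ℕ) (v : V) :
    T.pathProd lam (n + 1) v = T.pathProd lam n (T.par v) * lam v := by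
  simp only [pathProd, Finset.prod_range_succ', Function.iterate_succ_apply,
    Function.iterate_zero_apply]

theorem tsum_chiN_zero (u : V) (f : T.chiN 0 u → ℝ≥0∞) : ∑' v, f v = f ⟨u, rfl⟩ :=
  tsum_eq_single _ fun v hv => (hv (Subtype.ext v.2)).elim

theorem mem_chiN_succ {n : ℕ} {u w : V} :
    w ∈ T.chiN (n + 1) u ↔ ∃ v ∈ T.chiN n u, T.edge v w := by
  simp [chiN, chi]

theorem nonRoot_of_mem_chiN_succ {n : ℕ} {u w : V} (hw : w ∈ T.chiN (n + 1) u) :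
    T.nonRoot w :=
  let ⟨v, _, hvw⟩ := T.mem_chiN_succ.mp hw
  ⟨v, hvw⟩

def chiNSigmaEquiv (n : ℕ) (u : V) :
    (Σ v : T.chiN n u, {w : V // T.edge v w}) ≃ T.chiN (n + 1) u :=
  Equiv.ofBijective (fun p => ⟨p.2, T.mem_chiN_succ.mpr ⟨p.1, p.1.2, p.2.2⟩⟩) <| by
    refine ⟨fun p q hpq => ?_, fun w => ?_⟩
    · have hw : (p.2 : V) = q.2 := congrArg Subtype.val hpq
      refine Sigma.subtype_ext (Subtype.ext ?_) hw
      exact T.parent_unique _ _ _ p.2.2 (hw ▸ q.2.2)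
    · obtain ⟨v, hv, hvw⟩ := T.mem_chiN_succ.mp w.2
      exact ⟨⟨⟨v, hv⟩, ⟨w, hvw⟩⟩, rfl⟩

theorem tsum_chiN_tsum_children (n : ℕ) (u : V) (g : V → ℝ≥0∞) :
    ∑' v : T.chiN n u, ∑' w : {w : V // T.edge v w}, g w = ∑' w : T.chiN (n + 1) u, g w := by
  rw [← ENNReal.tsum_sigma' fun p : (Σ v : T.chiN n u, {w : V // T.edge v w}) => g p.2]
  exact (T.chiNSigmaEquiv n u).tsum_eq fun w => g w

theorem tsum_chiN_pathProd_mul_tsum_children (lam : V → ℂ) (n : ℕ) (u : V) (F : V → ℝ≥0∞) :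
    ∑' v : T.chiN n u, (‖T.pathProd lam n v‖₊ : ℝ≥0∞) ^ 2 *
        ∑' w : {w : V // T.edge v w}, (‖lam w‖₊ : ℝ≥0∞) ^ 2 * F w
      = ∑' w : T.chiN (n + 1) u, (‖T.pathProd lam (n + 1) w‖₊ : ℝ≥0∞) ^ 2 * F w := by
  rw [← T.tsum_chiN_tsum_children n u fun w => (‖T.pathProd lam (n + 1) w‖₊ : ℝ≥0∞) ^ 2 * F w]
  refine tsum_congr fun v => ?_
  rw [← ENNReal.tsum_mul_left]
  refine tsum_congr fun w => ?_
  rw [T.pathProd_succ, T.par_eq_of_edge w.2, nnnorm_mul, ENNReal.coe_mul, mul_pow, mul_assoc]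

end DirectedTree

section Consistency

variable {V : Type*} {T : DirectedTree V} {lam : V → ℂ} {μ : V → Measure ℝ≥0} {ε : V → ℝ≥0}

theorem consistentAt.measure_eq {u : V} (h : consistentAt T lam μ ε u) :
    μ u = Measure.sum (fun v : {v : V // T.edge u v} =>
        (‖lam v‖₊ : ℝ≥0∞) ^ 2 • (μ v).withDensity fun s => (s : ℝ≥0∞)⁻¹)
      + (ε u : ℝ≥0∞) • Measure.dirac 0 := by
  ext σ hσ
  rw [h σ hσ, Measure.add_apply, Measure.sum_apply _ hσ]
  simp only [Measure.smul_apply, smul_eq_mul, withDensity_apply _ hσ]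

theorem consistentAt.setLIntegral_eq {u : V} (h : consistentAt T lam μ ε u)
    {f : ℝ≥0 → ℝ≥0∞} (hf : Measurable f) {σ : Set ℝ≥0} (hσ : MeasurableSet σ) :
    ∫⁻ s in σ, f s ∂μ u
      = ∑' v : {v : V // T.edge u v},
          (‖lam v‖₊ : ℝ≥0∞) ^ 2 * ∫⁻ s in σ, (s : ℝ≥0∞)⁻¹ * f s ∂μ v
        + ε u * (f 0 * Measure.dirac 0 σ) := by
  classical
  rw [h.measure_eq, Measure.restrict_add, lintegral_add_measure, Measure.restrict_sum _ hσ,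
    lintegral_sum_measure, Measure.restrict_smul, lintegral_smul_measure,
    setLIntegral_dirac' hf hσ, Measure.dirac_apply' _ hσ]
  congr 1
  · refine tsum_congr fun v => ?_
    rw [Measure.restrict_smul, lintegral_smul_measure,
      setLIntegral_withDensity_eq_setLIntegral_mul _ (f := fun s : ℝ≥0 => (s : ℝ≥0∞)⁻¹)
        measurable_coe_nnreal_ennreal.inv hf hσ]
    rfl
  · by_cases h0 : (0 : ℝ≥0) ∈ σ <;> simp [h0]

theorem setLIntegral_singleton_zero_inv (ν : Measure ℝ≥0) :
    ∫⁻ s in {0}, (s : ℝ≥0∞)⁻¹ ∂ν = ∞ * ν {0} := by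
  rw [Measure.restrict_singleton, lintegral_smul_measure, lintegral_dirac]
  simp [mul_comm]

theorem consistentAt.child_le {u v : V} (h : consistentAt T lam μ ε u) (huv : T.edge u v)
    {σ : Set ℝ≥0} (hσ : MeasurableSet σ) :
    (‖lam v‖₊ : ℝ≥0∞) ^ 2 * ∫⁻ s in σ, (s : ℝ≥0∞)⁻¹ ∂μ v ≤ μ u σ := by
  rw [h σ hσ]
  exact (ENNReal.le_tsum (⟨v, huv⟩ : {v : V // T.edge u v})).trans le_self_add

theorem consistentAt.measure_zero_of_edge {u v : V} [IsFiniteMeasure (μ u)]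
    (h : consistentAt T lam μ ε u) (huv : T.edge u v) (hlam : lam v ≠ 0) :
    μ v {0} = 0 := by
  by_contra hv
  have hinf := h.child_le huv (measurableSet_singleton 0)
  rw [setLIntegral_singleton_zero_inv, ENNReal.top_mul hv,
    ENNReal.mul_top (pow_ne_zero _ (by simpa using hlam)), top_le_iff] at hinf
  exact measure_ne_top _ _ hinf

theorem measure_zero_eq_eps [∀ v, IsFiniteMeasure (μ v)]
    (hcons : ∀ u, consistentAt T lam μ ε u) (u : V) : μ u {0} = ε u := by
  have hchild : ∀ v : {v : V // T.edge u v},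
      (‖lam v‖₊ : ℝ≥0∞) ^ 2 * ∫⁻ s in {0}, (s : ℝ≥0∞)⁻¹ ∂μ v = 0 := fun v => by
    by_cases hlam : lam v = 0
    · simp [hlam]
    · rw [setLIntegral_singleton_zero_inv, (hcons u).measure_zero_of_edge v.2 hlam]
      simp
  rw [hcons u _ (measurableSet_singleton 0), ENNReal.tsum_eq_zero.mpr hchild, zero_add,
    Measure.dirac_apply_of_mem (Set.mem_singleton 0), mul_one]

theorem eps_eq_zero_of_edge [∀ v, IsFiniteMeasure (μ v)]
    (hcons : ∀ u, consistentAt T lam μ ε u) {u v : V} (huv : T.edge u v) (hlam : lam v ≠ 0) :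
    ε v = 0 := by
  have := (hcons u).measure_zero_of_edge huv hlam
  rwa [measure_zero_eq_eps hcons, ENNReal.coe_eq_zero] at this

theorem tsum_chiN_setLIntegral_eq (hcons : ∀ u, consistentAt T lam μ ε u) (n : ℕ) (u : V)
    {σ : Set ℝ≥0} (hσ : MeasurableSet σ) :
    ∑' v : T.chiN n u, (‖T.pathProd lam n v‖₊ : ℝ≥0∞) ^ 2
        * ∫⁻ s in σ, ((s : ℝ≥0∞) ^ n)⁻¹ ∂μ v
      = ∑' w : T.chiN (n + 1) u, (‖T.pathProd lam (n + 1) w‖₊ : ℝ≥0∞) ^ 2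
          * ∫⁻ s in σ, ((s : ℝ≥0∞) ^ (n + 1))⁻¹ ∂μ w
        + ∑' v : T.chiN n u, (‖T.pathProd lam n v‖₊ : ℝ≥0∞) ^ 2
          * (ε v * ((((0 : ℝ≥0) : ℝ≥0∞) ^ n)⁻¹ * Measure.dirac 0 σ)) := by
  have hpow : ∀ s : ℝ≥0, (s : ℝ≥0∞)⁻¹ * ((s : ℝ≥0∞) ^ n)⁻¹ = ((s : ℝ≥0∞) ^ (n + 1))⁻¹ :=
    fun s => by rw [pow_succ', ENNReal.mul_inv (.inr (by simp)) (.inl ENNReal.coe_ne_top)]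
  have hvertex := fun v : V =>
    (hcons v).setLIntegral_eq (f := fun s : ℝ≥0 => ((s : ℝ≥0∞) ^ n)⁻¹) (by fun_prop) hσ
  simp only [hpow] at hvertex
  simp only [hvertex, mul_add, ENNReal.tsum_add]
  rw [T.tsum_chiN_pathProd_mul_tsum_children lam n u fun w =>
    ∫⁻ s in σ, ((s : ℝ≥0∞) ^ (n + 1))⁻¹ ∂μ w]

theorem tsum_chiN_eps_eq_zero [∀ v, IsFiniteMeasure (μ v)]
    (hcons : ∀ u, consistentAt T lam μ ε u) (n : ℕ) (u : V) (x : ℝ≥0∞) :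
    ∑' v : T.chiN (n + 1) u, (‖T.pathProd lam (n + 1) v‖₊ : ℝ≥0∞) ^ 2 * (ε v * x) = 0 := by
  refine ENNReal.tsum_eq_zero.mpr fun v => ?_
  by_cases hlam : lam v = 0
  · simp [T.pathProd_succ, hlam]
  · obtain ⟨p, hpv⟩ := T.nonRoot_of_mem_chiN_succ v.2
    simp [eps_eq_zero_of_edge hcons hpv hlam]

end Consistency

/-- elementary properties of a consistent system of probability measures
on a directed tree. -/
theorem stmt12 {V : Type*} (T : DirectedTree V) (lam : V → ℂ)
    (ε : V → ℝ≥0) (μ : V → Measure ℝ≥0)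
    (hprob : ∀ v : V, IsProbabilityMeasure (μ v))
    (hcons : ∀ u : V, consistentAt T lam μ ε u) :
    (∀ u : V,
      (∑' v : {v : V // T.edge u v},
          (‖lam (v : V)‖₊ : ℝ≥0∞) ^ 2 * ∫⁻ s, ((s : ℝ≥0∞))⁻¹ ∂(μ (v : V))) ≤ 1
      ∧ (ε u : ℝ≥0∞) = 1 - ∑' v : {v : V // T.edge u v},
          (‖lam (v : V)‖₊ : ℝ≥0∞) ^ 2 * ∫⁻ s, ((s : ℝ≥0∞))⁻¹ ∂(μ (v : V)))
    ∧ (∀ u : V, μ u {0} = 0 ↔ ε u = 0)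
    ∧ (∀ v : V, T.nonRoot v → lam v ≠ 0 → μ v {0} = 0)
    ∧ (∀ (u : V) (n : ℕ), 1 ≤ n → ∀ σ : Set ℝ≥0, MeasurableSet σ →
        μ u σ = (∑' v : (T.chiN n u),
            (‖T.pathProd lam n (v : V)‖₊ : ℝ≥0∞) ^ 2
              * ∫⁻ s in σ, (((s : ℝ≥0∞)) ^ n)⁻¹ ∂(μ (v : V)))
          + (ε u : ℝ≥0∞) * Measure.dirac (0 : ℝ≥0) σ) := by
  refine ⟨fun u => ?_, fun u => ?_, fun v ⟨p, hpv⟩ hlam => (hcons p).measure_zero_of_edge hpv hlam,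
    fun u n hn σ hσ => ?_⟩
  · have htotal := hcons u Set.univ MeasurableSet.univ
    rw [measure_univ, Measure.dirac_apply_of_mem (Set.mem_univ 0), mul_one] at htotal
    simp only [Measure.restrict_univ] at htotal
    have hle := le_self_add.trans htotal.ge
    exact ⟨hle, ENNReal.eq_sub_of_add_eq (hle.trans_lt ENNReal.one_lt_top).ne
      (by rw [add_comm, htotal])⟩
  · rw [measure_zero_eq_eps hcons, ENNReal.coe_eq_zero]
  induction n, hn using Nat.le_induction with
  | base =>
    have h := tsum_chiN_setLIntegral_eq hcons 0 u hσ
    simpa [T.tsum_chiN_zero, DirectedTree.pathProd] using h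
  | succ n hn ih =>
    obtain ⟨m, rfl⟩ := Nat.exists_eq_add_of_le' hn
    rw [ih, tsum_chiN_setLIntegral_eq hcons _ u hσ, tsum_chiN_eps_eq_zero hcons, add_zero]
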